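/- arXiv:2212.09185 — 3 statements merged into one kernel-verified Lean document; each statement's English description precedes it below -/
import Mathlib

section
/- Suppose (F^p)_{p ∈ ℤ} is a decreasing filtration of V_ℂ by complex subspaces (F^{p+1} ⊆ F^p), with F^p = V_ℂ for p sufficiently small and F^p = 0 for p sufficiently large, such that V_ℂ = F^p ⊕ conj(F^{k-p+1}) for every p. Define V^{p,q} := F^p ∩ conj(F^q) for all pairs of integers with p+q = k. Then V_ℂ = ⊕_{p+q=k} V^{p,q}, conjugation maps V^{p,q} onto V^{q,p}, and F^p = ⊕_{i ≥ p} V^{i,k-i} for every p. (This is the converse direction of the equivalence between the two definitions of a Hodge structure.) -/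
open TensorProduct

instance : RingHomSurjective (starRingEnd ℂ) :=
  ⟨fun x => ⟨star x, star_star x⟩⟩

/-- Conjugation on the complexification `ℂ ⊗[ℝ] V`, `z ⊗ v ↦ z̄ ⊗ v`,
as a `starRingEnd ℂ`-semilinear map. -/
noncomputable def conjC (V : Type*) [AddCommGroup V] [Module ℝ V] :
    (ℂ ⊗[ℝ] V) →ₛₗ[starRingEnd ℂ] (ℂ ⊗[ℝ] V) where
  toFun := TensorProduct.map Complex.conjAe.toLinearMap LinearMap.id
  map_add' := map_add _
  map_smul' := by
    intro z x
    induction x using TensorProduct.induction_on with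
    | zero => simp
    | tmul c v =>
        simp [TensorProduct.smul_tmul', TensorProduct.map_tmul, map_mul]
    | add x y hx hy =>
        simp only [smul_add, map_add]
        exact congrArg₂ (· + ·) hx hy

lemma conjC_conjC {V : Type*} [AddCommGroup V] [Module ℝ V] (x : ℂ ⊗[ℝ] V) :
    conjC V (conjC V x) = x := by
  induction x using TensorProduct.induction_on with
  | zero => simp
  | tmul c v => simp [conjC, TensorProduct.map_tmul]
  | add x y hx hy => rw [map_add, map_add, hx, hy]

lemma conjC_injective {V : Type*} [AddCommGroup V] [Module ℝ V] :
    Function.Injective (conjC V) :=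
  Function.LeftInverse.injective conjC_conjC

lemma map_conjC_conjC {V : Type*} [AddCommGroup V] [Module ℝ V]
    (S : Submodule ℂ (ℂ ⊗[ℝ] V)) : (S.map (conjC V)).map (conjC V) = S := by
  ext x
  simp only [Submodule.mem_map]
  constructor
  · rintro ⟨y, ⟨z, hz, rfl⟩, rfl⟩; rwa [conjC_conjC]
  · intro hx; exact ⟨conjC V x, ⟨x, hx, rfl⟩, conjC_conjC x⟩
/-- Let `V` be a finite-dimensional real vector space and
`V_ℂ = ℂ ⊗[ℝ] V` its complexification.  Suppose `(F^p)_{p ∈ ℤ}` is a decreasing filtration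
of `V_ℂ` by complex subspaces, with `F^p = V_ℂ` for `p` sufficiently small and `F^p = 0`
for `p` sufficiently large, such that `V_ℂ = F^p ⊕ conj(F^{k-p+1})` for every `p`.
Define `V^{p,q} := F^p ∩ conj(F^q)` for `p + q = k` (indexed here by `p`, with `q = k - p`).
Then `V_ℂ = ⊕_{p+q=k} V^{p,q}`, conjugation maps `V^{p,q}` onto `V^{q,p}`, and
`F^p = ⊕_{i ≥ p} V^{i,k-i}` for every `p`. -/
theorem stmt1 {V : Type*} [AddCommGroup V] [Module ℝ V] [FiniteDimensional ℝ V]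
    (k : ℤ) (F : ℤ → Submodule ℂ (ℂ ⊗[ℝ] V))
    (hdec : ∀ p : ℤ, F (p + 1) ≤ F p)
    (hbot : ∃ b : ℤ, ∀ p ≥ b, F p = ⊥)
    (htop : ∃ a : ℤ, ∀ p ≤ a, F p = ⊤)
    (hcompl : ∀ p : ℤ, IsCompl (F p) ((F (k - p + 1)).map (conjC V)))
    (H : ℤ → Submodule ℂ (ℂ ⊗[ℝ] V))
    (hH : ∀ p : ℤ, H p = F p ⊓ (F (k - p)).map (conjC V)) :
    DirectSum.IsInternal H ∧
      (∀ p : ℤ, (H p).map (conjC V) = H (k - p)) ∧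
      (∀ p : ℤ, F p = ⨆ i ≥ p, H i) := by
  obtain ⟨b, hb⟩ := hbot
  obtain ⟨a, ha⟩ := htop
  have hmono : Antitone F := antitone_int_of_succ_le hdec
  have hHle1 : ∀ p, H p ≤ F p := fun p => (hH p) ▸ inf_le_left
  have hHle2 : ∀ p, H p ≤ (F (k - p)).map (conjC V) := fun p => (hH p) ▸ inf_le_right
  -- key decomposition F p = F (p+1) ⊔ H p
  have hdecomp : ∀ p : ℤ, F p = F (p + 1) ⊔ H p := by
    intro p
    have e : k - (p + 1) + 1 = k - p := by ring
    refine le_antisymm ?_ (sup_le (hdec p) (hHle1 p))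
    intro x hx
    have hx' : x ∈ F (p + 1) ⊔ (F (k - p)).map (conjC V) := by
      rw [← e, (hcompl (p + 1)).codisjoint.eq_top]
      exact Submodule.mem_top
    obtain ⟨y, hy, z, hz, rfl⟩ := Submodule.mem_sup.mp hx'
    have hzF : z ∈ F p := by
      simpa using sub_mem hx (hdec p hy)
    exact Submodule.add_mem_sup hy (by rw [hH p]; exact ⟨hzF, hz⟩)
  -- key disjointness
  have hdisj : ∀ p : ℤ,
      Disjoint (H p) (F (p + 1) ⊔ (F (k - p + 1)).map (conjC V)) := by
    intro p
    have e : k - (p + 1) + 1 = k - p := by ring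
    rw [Submodule.disjoint_def]
    intro x hxH hxS
    obtain ⟨y, hy, z, hz, hyz⟩ := Submodule.mem_sup.mp hxS
    have hxF : x ∈ F p := hHle1 p hxH
    have hzF : z ∈ F p := by
      have hyx : y + z ∈ F p := hyz ▸ hxF
      simpa using sub_mem hyx (hdec p hy)
    have hz0 : z = 0 := Submodule.disjoint_def.mp (hcompl p).disjoint z hzF hz
    have hxy : x = y := by rw [← hyz, hz0, add_zero]
    have hxF2 : x ∈ F (p + 1) := hxy ▸ hy
    have hxC : x ∈ (F (k - p)).map (conjC V) := hHle2 p hxH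
    exact Submodule.disjoint_def.mp (hcompl (p + 1)).disjoint x hxF2
      (by rw [e]; exact hxC)
  -- the sup bound
  have hsup_le : ∀ p : ℤ, (⨆ i ≥ p, H i) ≤ F p := fun p =>
    iSup₂_le fun i hi => (hHle1 i).trans (hmono hi)
  -- descending induction for F p = ⨆ i ≥ p, H i
  have main : ∀ n : ℕ, ∀ p : ℤ, b ≤ p + n → F p = ⨆ i ≥ p, H i := by
    intro n
    induction n with
    | zero =>
        intro p hp
        refine le_antisymm ?_ (hsup_le p)
        rw [hb p (by omega)]
        exact bot_le
    | succ n ih =>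
        intro p hp
        have h1 : F (p + 1) = ⨆ i ≥ p + 1, H i := ih (p + 1) (by push_cast at hp ⊢; omega)
        rw [hdecomp p, h1]
        refine le_antisymm (sup_le (iSup₂_le fun i hi =>
          le_iSup₂_of_le i (by omega) le_rfl) (le_iSup₂_of_le p le_rfl le_rfl)) ?_
        refine iSup₂_le fun i hi => ?_
        rcases eq_or_lt_of_le hi with rfl | h
        · exact le_sup_right
        · exact le_sup_of_le_left (le_iSup₂_of_le i (by omega) le_rfl)
  have hsup : ∀ p : ℤ, F p = ⨆ i ≥ p, H i := fun p =>
    main (b - p).toNat p (by omega)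
  refine ⟨?_, ?_, hsup⟩
  · rw [DirectSum.isInternal_submodule_iff_iSupIndep_and_iSup_eq_top]
    constructor
    · intro p
      refine (hdisj p).mono_right ?_
      refine iSup₂_le fun i hi => ?_
      rcases lt_or_gt_of_ne hi with h | h
      · exact le_sup_of_le_right ((hHle2 i).trans (Submodule.map_mono (hmono (by omega))))
      · exact le_sup_of_le_left ((hHle1 i).trans (hmono (by omega)))
    · refine le_antisymm le_top ?_
      calc (⊤ : Submodule ℂ (ℂ ⊗[ℝ] V)) = F a := (ha a le_rfl).symm
        _ = ⨆ i ≥ a, H i := hsup a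
        _ ≤ ⨆ i, H i := iSup₂_le fun i _ => le_iSup H i
  · intro p
    have e : k - (k - p) = p := by ring
    rw [hH p, Submodule.map_inf _ conjC_injective, map_conjC_conjC, hH (k - p), e,
      inf_comm]
end

section
/- Let F be a complex subspace of V_ℂ such that V_ℂ = F ⊕ conj(F), and let L ⊆ V be a ℤ-lattice. Then the image of L under the composite map V → V_ℂ → V_ℂ/F (inclusion into the complexification followed by the quotient projection) is a ℤ-lattice in the finite-dimensional real vector space underlying V_ℂ/F; consequently the quotient (V_ℂ/F)/L is a compact complex torus. (This is the statement that the Griffiths intermediate jacobian of an integral Hodge structure of odd weight is a complex torus.) -/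
open TensorProduct

/-- The natural inclusion `V → ℂ ⊗[ℝ] V`, `v ↦ 1 ⊗ v`. -/
noncomputable def iotaC (V : Type*) [AddCommGroup V] [Module ℝ V] :
    V →ₗ[ℝ] ℂ ⊗[ℝ] V :=
  TensorProduct.mk ℝ ℂ V 1

/-- A ℤ-lattice in a finite-dimensional real vector space, i.e. a discrete additive
subgroup spanning the space over ℝ; equivalently (which is the formulation used here),
the ℤ-span of an ℝ-basis. -/
def IsLatticeIn (E : Type*) [AddCommGroup E] [Module ℝ E] [FiniteDimensional ℝ E]
    (L : Submodule ℤ E) : Prop :=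
  ∃ b : Module.Basis (Fin (Module.finrank ℝ E)) ℝ E,
    L = Submodule.span ℤ (Set.range b)

section Complexification

variable {V : Type*} [AddCommGroup V] [Module ℝ V]

@[simp] lemma conjC_tmul (z : ℂ) (v : V) :
    conjC V (z ⊗ₜ[ℝ] v) = (starRingEnd ℂ z) ⊗ₜ[ℝ] v := rfl

lemma iotaC_apply (v : V) : iotaC V v = (1 : ℂ) ⊗ₜ[ℝ] v := rfl

lemma iotaC_injective : Function.Injective (iotaC V) :=
  Module.FaithfullyFlat.tensorProduct_mk_injective V

@[simp] lemma conjC_iotaC (v : V) : conjC V (iotaC V v) = iotaC V v := by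
  simp [iotaC_apply]

lemma add_conjC_mem_range_iotaC (y : ℂ ⊗[ℝ] V) :
    y + conjC V y ∈ LinearMap.range (iotaC V) := by
  induction y using TensorProduct.induction_on with
  | zero => simp
  | tmul z v =>
    refine ⟨(2 * z.re) • v, ?_⟩
    rw [map_smul, iotaC_apply, conjC_tmul, ← TensorProduct.add_tmul, TensorProduct.smul_tmul',
      Complex.add_conj, Complex.real_smul, mul_one]
  | add x y hx hy =>
    rw [map_add, add_add_add_comm]
    exact add_mem hx hy

variable {F : Submodule ℂ (ℂ ⊗[ℝ] V)}

/-- A real vector lying in `F` also lies in `conj F`. -/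
lemma injective_mkQ_comp_iotaC (hF : Disjoint F (F.map (conjC V))) :
    Function.Injective ((F.mkQ.restrictScalars ℝ) ∘ₗ iotaC V) := by
  rw [← LinearMap.ker_eq_bot, LinearMap.ker_eq_bot']
  intro v hv
  have hvF : iotaC V v ∈ F := (Submodule.Quotient.mk_eq_zero F).mp hv
  have hvconjF : iotaC V v ∈ F.map (conjC V) := ⟨_, hvF, conjC_iotaC v⟩
  exact iotaC_injective (by simpa using hF.le_bot ⟨hvF, hvconjF⟩)

/-- Write `x = p + q̄` with `p, q ∈ F`; then `x ≡ q + q̄ (mod F)`, and `q + q̄` is real. -/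
lemma surjective_mkQ_comp_iotaC (hF : Codisjoint F (F.map (conjC V))) :
    Function.Surjective ((F.mkQ.restrictScalars ℝ) ∘ₗ iotaC V) := by
  intro y
  obtain ⟨x, rfl⟩ := F.mkQ_surjective y
  obtain ⟨p, hp, _, ⟨q, hq, rfl⟩, rfl⟩ :=
    Submodule.mem_sup.mp (hF.eq_top ▸ Submodule.mem_top : x ∈ F ⊔ F.map (conjC V))
  obtain ⟨v, hv⟩ := add_conjC_mem_range_iotaC q
  refine ⟨v, ?_⟩
  simp only [LinearMap.comp_apply, LinearMap.restrictScalars_apply, hv, map_add,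
    (Submodule.Quotient.mk_eq_zero F).mpr hp, (Submodule.Quotient.mk_eq_zero F).mpr hq,
    Submodule.mkQ_apply, zero_add]

end Complexification

lemma IsLatticeIn.map_linearEquiv {E E' : Type*} [AddCommGroup E] [Module ℝ E]
    [FiniteDimensional ℝ E] [AddCommGroup E'] [Module ℝ E'] [FiniteDimensional ℝ E']
    {L : Submodule ℤ E} (hL : IsLatticeIn E L) (e : E ≃ₗ[ℝ] E') :
    IsLatticeIn E' (L.map ((e : E →ₗ[ℝ] E').restrictScalars ℤ)) := by
  obtain ⟨b, rfl⟩ := hL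
  refine ⟨(b.map e).reindex (finCongr e.finrank_eq), ?_⟩
  rw [Module.Basis.range_reindex, Module.Basis.coe_map, Set.range_comp, Submodule.map_span]
  rfl

/-- Let `V` be a finite-dimensional real vector space, `F` a complex
subspace of `V_ℂ = ℂ ⊗[ℝ] V` with `V_ℂ = F ⊕ conj(F)`, and `L ⊆ V` a ℤ-lattice.
Then the image of `L` under the composite `V → V_ℂ → V_ℂ/F` is a ℤ-lattice in the
finite-dimensional real vector space underlying `V_ℂ/F` (consequently the quotient
`(V_ℂ/F)/L` is a compact complex torus: this is the statement that the Griffiths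
intermediate jacobian of an integral Hodge structure of odd weight is a complex torus). -/
theorem stmt7 {V : Type*} [AddCommGroup V] [Module ℝ V] [FiniteDimensional ℝ V]
    (F : Submodule ℂ (ℂ ⊗[ℝ] V))
    (hcompl : IsCompl F (F.map (conjC V)))
    (L : Submodule ℤ V)
    (hL : IsLatticeIn V L) :
    IsLatticeIn ((ℂ ⊗[ℝ] V) ⧸ F)
      (L.map (((F.mkQ.restrictScalars ℝ) ∘ₗ iotaC V).restrictScalars ℤ)) :=
  hL.map_linearEquiv <| LinearEquiv.ofBijective _
    ⟨injective_mkQ_comp_iotaC hcompl.disjoint, surjective_mkQ_comp_iotaC hcompl.codisjoint⟩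
end

section
/- Let W be a finite-dimensional complex vector space, k an integer, and ψ a nondegenerate bilinear form on W satisfying ψ(w, v) = (-1)^k ψ(v, w) for all v, w. Let (F^p)_{p∈ℤ} and (G^p)_{p∈ℤ} be two decreasing filtrations of W by complex subspaces, each equal to W for p sufficiently small and to 0 for p sufficiently large, such that for every p: dim F^p = dim G^p, dim F^p + dim F^{k-p+1} = dim W, and ψ(F^p, F^{k-p+1}) = 0 and ψ(G^p, G^{k-p+1}) = 0. Then there exists a complex-linear automorphism g of W with ψ(g v, g w) = ψ(v, w) for all v, w and g(F^p) = G^p for every p. (Transitivity of the isometry group of ψ on the compact dual Ď of the period domain.) -/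
/-!
Induction on `dim W`. Let `p₁` be the largest index with `F^{p₁} ≠ 0`; by the dimension condition
`F^p = W` for `p ≤ k - p₁`. If `2 p₁ > k`, a nonzero `v ∈ F^{p₁}` is isotropic and every step of
`F` other than `0` and `W` lies between `K v` and `v^⊥`. Completing `v` to a hyperbolic pair
`(v, u)` splits `W` as the plane `P = ⟨v, u⟩` plus `P^⊥`, and `F` splits accordingly into
`K v` (or `0`, or `P`) plus a filtration of `P^⊥` with the same properties. Doing the same for `G`
with `v' ∈ G^{p₁}`, the induction hypothesis on `P^⊥` glued with the isometry of planes
`v ↦ v'`, `u ↦ u'` carries `F` to `G`. If `2 p₁ ≤ k` every `F^p` is `0` or `W`, so any isometry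
will do: for alternating `ψ` every vector is isotropic and the same splitting applies, while
nondegenerate symmetric forms over an algebraically closed field are all sums of squares.
-/

open Module Submodule

section

variable {K W W' : Type*} [Field K] [AddCommGroup W] [Module K W] [AddCommGroup W'] [Module K W']

theorem Submodule.map_eq_of_eq_bot_or_eq_top [FiniteDimensional K W] [FiniteDimensional K W']
    (e : W ≃ₗ[K] W') {X : Submodule K W} {Y : Submodule K W'} (hX : X = ⊥ ∨ X = ⊤)
    (hXY : finrank K X = finrank K Y) : X.map (e : W →ₗ[K] W') = Y := by
  rcases hX with rfl | rfl
  · rw [map_bot, eq_comm, ← finrank_eq_zero, ← hXY, finrank_bot]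
  · rw [map_top, LinearEquiv.range, eq_comm]
    exact eq_top_of_finrank_eq (by rw [← hXY, finrank_top, e.finrank_eq])

theorem Submodule.eq_bot_or_eq_top_iff_of_finrank_eq [FiniteDimensional K W]
    [FiniteDimensional K W'] {X : Submodule K W} {Y : Submodule K W'}
    (hXY : finrank K X = finrank K Y) (hW : finrank K W = finrank K W') :
    X = ⊥ ∨ X = ⊤ ↔ Y = ⊥ ∨ Y = ⊤ := by
  rw [← finrank_eq_zero, ← finrank_eq_zero, eq_top_iff_finrank_eq, eq_top_iff_finrank_eq, hXY, hW]

theorem Submodule.finrank_comap_subtype (H : Submodule K W) (X : Submodule K W) :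
    finrank K (X.comap H.subtype) = finrank K ↥(H ⊓ X) := by
  rw [← map_comap_subtype, finrank_map_subtype_eq]

namespace LinearMap.BilinForm

variable {ψ : LinearMap.BilinForm K W} {ψ' : LinearMap.BilinForm K W'} {ε : K}

theorem isRefl_of_apply_swap (hψ : ∀ v w, ψ w v = ε * ψ v w) : ψ.IsRefl :=
  fun v w h => by rw [hψ, h, mul_zero]

theorem apply_self_eq_zero_of_apply_swap_neg [NeZero (2 : K)]
    (hψ : ∀ v w, ψ w v = -1 * ψ v w) (x : W) : ψ x x = 0 := by
  have h : (2 : K) * ψ x x = 0 := by linear_combination hψ x x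
  exact (mul_eq_zero.mp h).resolve_left two_ne_zero

theorem exists_apply_eq_one (hnd : ψ.SeparatingLeft) {v : W} (hv : v ≠ 0) : ∃ u, ψ v u = 1 := by
  obtain ⟨w, hw⟩ : ∃ w, ψ v w ≠ 0 := by
    by_contra! h
    exact hv (hnd v h)
  exact ⟨(ψ v w)⁻¹ • w, by simp [hw]⟩

theorem exists_hyperbolic_partner [NeZero (2 : K)] (hψ : ∀ v w, ψ w v = ε * ψ v w)
    (hε : ε = 1 ∨ ε = -1) (hnd : ψ.SeparatingLeft) {v : W} (hv : v ≠ 0) (hvv : ψ v v = 0) :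
    ∃ u, ψ v u = 1 ∧ ψ u u = 0 := by
  obtain ⟨u, hvu⟩ := exists_apply_eq_one hnd hv
  refine ⟨u - (ψ u u / 2) • v, by simp [hvu, hvv], ?_⟩
  have huv : ψ u v = ε := by rw [hψ, hvu, mul_one]
  rcases hε with rfl | rfl
  · simp only [map_sub, map_smul, LinearMap.sub_apply, LinearMap.smul_apply, smul_eq_mul, hvu,
      huv, hvv]
    field_simp
    ring
  · simp [apply_self_eq_zero_of_apply_swap_neg hψ u]

theorem mem_orthogonal_span_pair {v u m : W} :
    m ∈ ψ.orthogonal (span K {v, u}) ↔ ψ v m = 0 ∧ ψ u m = 0 := by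
  refine ⟨fun h => ⟨h v (subset_span (by simp)), h u (subset_span (by simp))⟩, ?_⟩
  rintro ⟨hv, hu⟩ x hx
  obtain ⟨a, b, rfl⟩ := mem_span_pair.mp hx
  simp [hv, hu]

section HyperbolicPair

variable {v u : W}

theorem linearIndependent_hyperbolic_pair (hvv : ψ v v = 0) (hvu : ψ v u = 1)
    (huv : ψ u v ≠ 0) : LinearIndependent K ![v, u] := by
  refine LinearIndependent.pair_iff.mpr fun a b h => ?_
  have hb : b = 0 := by simpa [hvv, hvu] using congr_arg (ψ v) h
  subst hb
  exact ⟨by simpa [huv] using congr_arg (ψ u) h, rfl⟩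

theorem disjoint_span_pair_orthogonal (hvv : ψ v v = 0) (hvu : ψ v u = 1) (huv : ψ u v ≠ 0) :
    Disjoint (span K {v, u}) (ψ.orthogonal (span K {v, u})) := by
  rw [disjoint_iff, eq_bot_iff]
  rintro x ⟨hxP, hxH⟩
  obtain ⟨hv, hu⟩ := mem_orthogonal_span_pair.mp hxH
  obtain ⟨a, b, rfl⟩ := mem_span_pair.mp hxP
  have hb : b = 0 := by simpa [hvv, hvu] using hv
  subst hb
  have ha : a = 0 := by simpa [huv] using hu
  simp [ha]

theorem eq_span_singleton_sup_orthogonal_inf (hvv : ψ v v = 0) (huv : ψ u v ≠ 0)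
    {X : Submodule K W} (hvX : v ∈ X) (hX : ∀ x ∈ X, ψ v x = 0) :
    X = K ∙ v ⊔ ψ.orthogonal (span K {v, u}) ⊓ X := by
  refine le_antisymm (fun x hx => ?_)
    (sup_le ((span_singleton_le_iff_mem v X).mpr hvX) inf_le_right)
  set c := ψ u x / ψ u v
  have hx' : x - c • v ∈ ψ.orthogonal (span K {v, u}) ⊓ X := by
    refine ⟨mem_orthogonal_span_pair.mpr ⟨?_, ?_⟩, X.sub_mem hx (X.smul_mem c hvX)⟩
    · simp [hX x hx, hvv]
    · simp [c, huv]
  exact mem_sup.mpr ⟨c • v, mem_span_singleton.mpr ⟨c, rfl⟩, _, hx', add_sub_cancel _ _⟩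

variable [FiniteDimensional K W]

theorem isCompl_span_pair_orthogonal (hψ : ψ.IsRefl) (hvv : ψ v v = 0) (hvu : ψ v u = 1)
    (huv : ψ u v ≠ 0) : IsCompl (span K {v, u}) (ψ.orthogonal (span K {v, u})) :=
  (isCompl_orthogonal_iff_disjoint hψ).mpr (disjoint_span_pair_orthogonal hvv hvu huv)

theorem finrank_orthogonal_span_pair_add_two (hψ : ψ.IsRefl) (hvv : ψ v v = 0)
    (hvu : ψ v u = 1) (huv : ψ u v ≠ 0) :
    finrank K (ψ.orthogonal (span K {v, u})) + 2 = finrank K W := by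
  rw [← finrank_add_eq_of_isCompl (isCompl_span_pair_orthogonal hψ hvv hvu huv), add_comm,
    ← Matrix.range_cons_cons_empty v u ![],
    finrank_span_eq_card (linearIndependent_hyperbolic_pair hvv hvu huv)]
  simp

theorem finrank_orthogonal_inf_add_one (hvv : ψ v v = 0) (huv : ψ u v ≠ 0)
    {X : Submodule K W} (hvX : v ∈ X) (hX : ∀ x ∈ X, ψ v x = 0) :
    finrank K ↥(ψ.orthogonal (span K {v, u}) ⊓ X) + 1 = finrank K X := by
  have hv : v ≠ 0 := by rintro rfl; simp at huv
  have hdisj : K ∙ v ⊓ (ψ.orthogonal (span K {v, u}) ⊓ X) = ⊥ := by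
    refine eq_bot_iff.mpr fun x ⟨hxv, hxH, _⟩ => ?_
    obtain ⟨a, rfl⟩ := mem_span_singleton.mp hxv
    have ha : a = 0 := by simpa [huv] using (mem_orthogonal_span_pair.mp hxH).2
    simp [ha]
  have h := finrank_sup_add_finrank_inf_eq (K ∙ v) (ψ.orthogonal (span K {v, u}) ⊓ X)
  rw [← eq_span_singleton_sup_orthogonal_inf hvv huv hvX hX, hdisj,
    finrank_span_singleton hv] at h
  simpa [add_comm] using h.symm

end HyperbolicPair

theorem separatingLeft_restrict_orthogonal [FiniteDimensional K W] (hψ : ψ.IsRefl)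
    (hnd : ψ.SeparatingLeft) {P : Submodule K W} (hP : IsCompl P (ψ.orthogonal P)) :
    (ψ.restrict (ψ.orthogonal P)).SeparatingLeft := by
  have hnd' : ψ.Nondegenerate := (hψ.nondegenerate_iff_separatingLeft).mpr hnd
  refine ((restrict_nondegenerate_iff_isCompl_orthogonal hψ).mpr ?_).1
  rw [orthogonal_orthogonal hnd' hψ]
  exact hP.symm

theorem exists_isometry_of_isCompl (hψ : ψ.IsRefl) (hψ' : ψ'.IsRefl) {P : Submodule K W}
    {P' : Submodule K W'} (hP : IsCompl P (ψ.orthogonal P)) (hP' : IsCompl P' (ψ'.orthogonal P'))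
    (e₁ : P ≃ₗ[K] P') (he₁ : ∀ x y, ψ' (e₁ x) (e₁ y) = ψ x y)
    (e₂ : ψ.orthogonal P ≃ₗ[K] ψ'.orthogonal P') (he₂ : ∀ x y, ψ' (e₂ x) (e₂ y) = ψ x y) :
    ∃ e : W ≃ₗ[K] W', (∀ x y, ψ' (e x) (e y) = ψ x y) ∧ (∀ x : P, e x = e₁ x) ∧
      ∀ x : ψ.orthogonal P, e x = e₂ x := by
  let e := (prodEquivOfIsCompl _ _ hP).symm ≪≫ₗ e₁.prodCongr e₂ ≪≫ₗ prodEquivOfIsCompl _ _ hP'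
  have he : ∀ (x : P) (y : ψ.orthogonal P), e (x + y) = e₁ x + e₂ y := by
    intro x y
    have : (prodEquivOfIsCompl _ _ hP).symm (x + y) = (x, y) :=
      (LinearEquiv.symm_apply_eq _).mpr rfl
    simp [e, this]
  refine ⟨e, fun x y => ?_, fun x => by simpa using he x 0, fun y => by simpa using he 0 y⟩
  obtain ⟨⟨x₁, x₂⟩, rfl⟩ := (prodEquivOfIsCompl _ _ hP).surjective x
  obtain ⟨⟨y₁, y₂⟩, rfl⟩ := (prodEquivOfIsCompl _ _ hP).surjective y
  simp only [coe_prodEquivOfIsCompl', he, map_add, LinearMap.add_apply, he₁, he₂]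
  rw [(e₂ y₂).2 _ (e₁ x₁).2, hψ' _ _ ((e₂ x₂).2 _ (e₁ y₁).2), y₂.2 _ x₁.2, hψ _ _ (x₂.2 _ y₁.2)]

theorem exists_isometry_of_basis {ι : Type*} (b : Basis ι K W) (b' : Basis ι K W')
    (h : ∀ i j, ψ' (b' i) (b' j) = ψ (b i) (b j)) :
    ∃ e : W ≃ₗ[K] W', (∀ x y, ψ' (e x) (e y) = ψ x y) ∧ ∀ i, e (b i) = b' i := by
  let e := b.equiv b' (Equiv.refl ι)
  have he : ψ'.compl₁₂ e.toLinearMap e.toLinearMap = ψ := b.ext fun i => b.ext fun j => by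
    simp [e, h]
  exact ⟨e, fun x y => LinearMap.congr_fun₂ he x y, fun i => by simp [e]⟩

noncomputable def hyperbolicBasis {v u : W} (hvv : ψ v v = 0) (hvu : ψ v u = 1)
    (huv : ψ u v ≠ 0) : Basis (Fin 2) K (span K {v, u}) :=
  (Basis.span (linearIndependent_hyperbolic_pair hvv hvu huv)).map
    (LinearEquiv.ofEq _ _ (by rw [Matrix.range_cons_cons_empty]))

theorem coe_hyperbolicBasis {v u : W} (hvv : ψ v v = 0) (hvu : ψ v u = 1) (huv : ψ u v ≠ 0)
    (i : Fin 2) : (hyperbolicBasis hvv hvu huv i : W) = ![v, u] i := by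
  simp [hyperbolicBasis]

theorem exists_isometry_span_pair {v u : W} {v' u' : W'} (hvv : ψ v v = 0) (huu : ψ u u = 0)
    (hvu : ψ v u = 1) (huv : ψ u v ≠ 0) (hvv' : ψ' v' v' = 0) (huu' : ψ' u' u' = 0)
    (hvu' : ψ' v' u' = 1) (huv' : ψ' u' v' = ψ u v) :
    ∃ e : span K {v, u} ≃ₗ[K] span K {v', u'}, (∀ x y, ψ' (e x) (e y) = ψ x y) ∧
      (e ⟨v, subset_span (by simp)⟩ : W') = v' := by
  obtain ⟨e, he, heb⟩ := exists_isometry_of_basis (ψ := ψ.restrict _) (ψ' := ψ'.restrict _)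
    (hyperbolicBasis hvv hvu huv) (hyperbolicBasis hvv' hvu' (huv' ▸ huv)) fun i j => by
      fin_cases i <;> fin_cases j <;>
        simp [coe_hyperbolicBasis, hvv, huu, hvu, hvv', huu', hvu', huv']
  refine ⟨e, he, ?_⟩
  have hv : (⟨v, subset_span (by simp)⟩ : span K {v, u}) = hyperbolicBasis hvv hvu huv 0 :=
    Subtype.ext (by simp [coe_hyperbolicBasis])
  rw [hv, heb, coe_hyperbolicBasis]
  rfl

/-- Both forms are equivalent to a sum of `finrank` squares. -/
theorem exists_isometry_of_symm [IsAlgClosed K] [NeZero (2 : K)] [FiniteDimensional K W]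
    [FiniteDimensional K W'] (hψ : ∀ v w, ψ v w = ψ w v) (hψ' : ∀ v w, ψ' v w = ψ' w v)
    (hnd : ψ.SeparatingLeft) (hnd' : ψ'.SeparatingLeft) (hdim : finrank K W = finrank K W') :
    ∃ e : W ≃ₗ[K] W', ∀ x y, ψ' (e x) (e y) = ψ x y := by
  let _ : Invertible (2 : K) := invertibleOfNonzero two_ne_zero
  have hQ : QuadraticMap.associated ψ.toQuadraticMap = ψ :=
    QuadraticMap.associated_left_inverse K hψ
  have hQ' : QuadraticMap.associated ψ'.toQuadraticMap = ψ' :=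
    QuadraticMap.associated_left_inverse K hψ'
  have h := QuadraticForm.equivalent_weightedSumSquares_of_isAlgClosed _ (hQ ▸ hnd)
  have h' := QuadraticForm.equivalent_weightedSumSquares_of_isAlgClosed _ (hQ' ▸ hnd')
  rw [← hdim] at h'
  obtain ⟨f⟩ := h.trans h'.symm
  refine ⟨f.toLinearEquiv, fun x y => ?_⟩
  have hf : ψ'.toQuadraticMap.comp f.toLinearEquiv.toLinearMap = ψ.toQuadraticMap :=
    QuadraticMap.ext f.map_app
  have := QuadraticMap.associated_comp K ψ'.toQuadraticMap f.toLinearEquiv.toLinearMap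
  rw [hf, hQ, hQ'] at this
  exact (LinearMap.congr_fun₂ this x y).symm

end LinearMap.BilinForm

/-- A point of the compact dual `Ď` of the period domain. -/
structure IsIsotropicFiltration (ψ : LinearMap.BilinForm K W) (k : ℤ)
    (F : ℤ → Submodule K W) : Prop where
  antitone : Antitone F
  eventually_bot : ∃ b, ∀ p ≥ b, F p = ⊥
  finrank_add : ∀ p, finrank K (F p) + finrank K (F (k - p + 1)) = finrank K W
  isotropic : ∀ p, ∀ v ∈ F p, ∀ w ∈ F (k - p + 1), ψ v w = 0

/-- `v` can be split off `F`: each step is `⊥`, `⊤`, or lies between `K ∙ v` and `v^⊥`. -/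
def IsAdapted (ψ : LinearMap.BilinForm K W) (F : ℤ → Submodule K W) (v : W) : Prop :=
  ∀ p, F p = ⊥ ∨ F p = ⊤ ∨ (v ∈ F p ∧ ∀ x ∈ F p, ψ v x = 0)

namespace IsIsotropicFiltration

variable {ψ : LinearMap.BilinForm K W} {k : ℤ} {F : ℤ → Submodule K W}

theorem of_finrank_eq [FiniteDimensional K W'] {ψ' : LinearMap.BilinForm K W'}
    {G : ℤ → Submodule K W'} (hF : IsIsotropicFiltration ψ k F) (hG : Antitone G)
    (hGiso : ∀ p, ∀ v ∈ G p, ∀ w ∈ G (k - p + 1), ψ' v w = 0)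
    (hdim : ∀ p, finrank K (F p) = finrank K (G p)) (hW : finrank K W = finrank K W') :
    IsIsotropicFiltration ψ' k G where
  antitone := hG
  eventually_bot := by
    obtain ⟨b, hb⟩ := hF.eventually_bot
    exact ⟨b, fun p hp => finrank_eq_zero.mp (by rw [← hdim, hb p hp, finrank_bot])⟩
  finrank_add p := by rw [← hdim, ← hdim, hF.finrank_add, hW]
  isotropic := hGiso

theorem apply_self_eq_zero [NeZero (2 : K)] (hF : IsIsotropicFiltration ψ k F) {ε : K}
    (hψ : ∀ v w, ψ w v = ε * ψ v w) {p₁ : ℤ} (h : k < 2 * p₁ ∨ ε = -1) {v : W}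
    (hv : v ∈ F p₁) : ψ v v = 0 := by
  rcases h with hk | rfl
  · exact hF.isotropic p₁ v hv v (hF.antitone (by omega) hv)
  · exact LinearMap.BilinForm.apply_self_eq_zero_of_apply_swap_neg hψ v

variable [FiniteDimensional K W]

theorem exists_greatest_ne_bot [Nontrivial W] (hF : IsIsotropicFiltration ψ k F) :
    ∃ p₁, F p₁ ≠ ⊥ ∧ ∀ p > p₁, F p = ⊥ := by
  obtain ⟨b, hb⟩ := hF.eventually_bot
  have hne : F (k - b + 1) ≠ ⊥ := by
    intro h
    have := hF.finrank_add (k - b + 1)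
    rw [h, hb _ (by omega), finrank_bot] at this
    exact finrank_pos.ne' this.symm
  obtain ⟨p₁, hp₁, hmax⟩ := Int.exists_greatest_of_bdd (P := fun p => F p ≠ ⊥)
    ⟨b, fun p hp => not_lt.mp fun h => hp (hb p h.le)⟩ ⟨_, hne⟩
  exact ⟨p₁, hp₁, fun p hp => not_not.mp fun h => not_lt.mpr (hmax p h) hp⟩

theorem eq_top_of_le (hF : IsIsotropicFiltration ψ k F) {p₁ : ℤ} (hmax : ∀ p > p₁, F p = ⊥)
    {p : ℤ} (hp : p ≤ k - p₁) : F p = ⊤ := by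
  have := hF.finrank_add p
  rw [hmax (k - p + 1) (by omega), finrank_bot, add_zero] at this
  exact eq_top_of_finrank_eq this

theorem eq_bot_or_eq_top (hF : IsIsotropicFiltration ψ k F) {p₁ : ℤ} (hmax : ∀ p > p₁, F p = ⊥)
    (hk : 2 * p₁ ≤ k) (p : ℤ) : F p = ⊥ ∨ F p = ⊤ := by
  rcases lt_or_ge p₁ p with hp | hp
  · exact Or.inl (hmax p hp)
  · exact Or.inr (hF.eq_top_of_le hmax (by omega))

theorem isAdapted_of_mem (hF : IsIsotropicFiltration ψ k F) {p₁ : ℤ} (hmax : ∀ p > p₁, F p = ⊥)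
    {v : W} (hv : v ∈ F p₁) : IsAdapted ψ F v := by
  intro p
  by_cases hp : p₁ < p
  · exact Or.inl (hmax p hp)
  by_cases hp' : p ≤ k - p₁
  · exact Or.inr (Or.inl (hF.eq_top_of_le hmax hp'))
  exact Or.inr (Or.inr ⟨hF.antitone (not_lt.mp hp) hv,
    fun x hx => hF.isotropic p₁ v hv x (hF.antitone (by omega) hx)⟩)

/-- Any `v ≠ 0` in the last nonzero step `F^{p₁}` will do: it is isotropic if `2 p₁ > k`, while
if `2 p₁ ≤ k` every step is `⊥` or `⊤`. -/
theorem exists_isotropic_isAdapted [Nontrivial W] [NeZero (2 : K)]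
    (hF : IsIsotropicFiltration ψ k F) {ε : K} (hψ : ∀ v w, ψ w v = ε * ψ v w)
    (hε : ε = 1 ∨ ε = -1) (h : ¬((∀ p, F p = ⊥ ∨ F p = ⊤) ∧ ε = 1)) :
    ∃ v, v ≠ 0 ∧ ψ v v = 0 ∧ IsAdapted ψ F v := by
  obtain ⟨p₁, hp₁, hmax⟩ := hF.exists_greatest_ne_bot
  obtain ⟨v, hvF, hv⟩ := exists_mem_ne_zero_of_ne_bot hp₁
  have hiso : k < 2 * p₁ ∨ ε = -1 := by
    refine (not_and_or.mp h).imp (fun htriv => ?_) hε.resolve_left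
    by_contra! hk
    exact htriv (hF.eq_bot_or_eq_top hmax hk)
  exact ⟨v, hv, hF.apply_self_eq_zero hψ hiso hvF, hF.isAdapted_of_mem hmax hvF⟩

end IsIsotropicFiltration

section HyperbolicSplitting

open LinearMap.BilinForm

variable {ψ : LinearMap.BilinForm K W} {ψ' : LinearMap.BilinForm K W'} {k : ℤ}
  {F : ℤ → Submodule K W} {G : ℤ → Submodule K W'} {v u : W} {v' u' : W'}

theorem finrank_orthogonal_inf_trichotomy [FiniteDimensional K W] (hψ : ψ.IsRefl)
    (hvv : ψ v v = 0) (hvu : ψ v u = 1) (huv : ψ u v ≠ 0) (hFv : IsAdapted ψ F v) (p : ℤ) :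
    (finrank K ↥(ψ.orthogonal (span K {v, u}) ⊓ F p) = 0 ∧ finrank K (F p) = 0) ∨
      (finrank K ↥(ψ.orthogonal (span K {v, u}) ⊓ F p) + 2 = finrank K W ∧
        finrank K (F p) = finrank K W) ∨
      (finrank K ↥(ψ.orthogonal (span K {v, u}) ⊓ F p) + 1 = finrank K (F p) ∧
        finrank K (F p) < finrank K W) := by
  rcases hFv p with h | h | ⟨hvF, hF⟩
  · simp [h]
  · rw [h, inf_top_eq, finrank_top]
    exact Or.inr (Or.inl ⟨finrank_orthogonal_span_pair_add_two hψ hvv hvu huv, rfl⟩)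
  · refine Or.inr (Or.inr ⟨finrank_orthogonal_inf_add_one hvv huv hvF hF, finrank_lt fun h => ?_⟩)
    simpa [hvu] using hF u (h ▸ mem_top)

theorem IsIsotropicFiltration.comap_orthogonal_span_pair [FiniteDimensional K W]
    (hF : IsIsotropicFiltration ψ k F) (hψ : ψ.IsRefl) (hvv : ψ v v = 0) (hvu : ψ v u = 1)
    (huv : ψ u v ≠ 0) (hFv : IsAdapted ψ F v) :
    IsIsotropicFiltration (ψ.restrict (ψ.orthogonal (span K {v, u}))) k
      fun p => (F p).comap (ψ.orthogonal (span K {v, u})).subtype where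
  antitone _ _ h := comap_mono (hF.antitone h)
  eventually_bot := by
    obtain ⟨b, hb⟩ := hF.eventually_bot
    exact ⟨b, fun p hp => by simp [hb p hp]⟩
  finrank_add p := by
    have := hF.finrank_add p
    have := finrank_orthogonal_span_pair_add_two hψ hvv hvu huv
    have := finrank_orthogonal_inf_trichotomy hψ hvv hvu huv hFv p
    have := finrank_orthogonal_inf_trichotomy hψ hvv hvu huv hFv (k - p + 1)
    simp only [finrank_comap_subtype] at *
    omega
  isotropic p x hx y hy := hF.isotropic p x hx y hy

theorem finrank_comap_orthogonal_span_pair_eq [FiniteDimensional K W] [FiniteDimensional K W']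
    (hψ : ψ.IsRefl) (hψ' : ψ'.IsRefl) (hvv : ψ v v = 0) (hvu : ψ v u = 1) (huv : ψ u v ≠ 0)
    (hvv' : ψ' v' v' = 0) (hvu' : ψ' v' u' = 1) (huv' : ψ' u' v' ≠ 0)
    (hFv : IsAdapted ψ F v) (hGv : IsAdapted ψ' G v') (hW : finrank K W = finrank K W') {p : ℤ}
    (hp : finrank K (F p) = finrank K (G p)) :
    finrank K ((F p).comap (ψ.orthogonal (span K {v, u})).subtype) =
      finrank K ((G p).comap (ψ'.orthogonal (span K {v', u'})).subtype) := by
  have := finrank_orthogonal_inf_trichotomy hψ hvv hvu huv hFv p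
  have := finrank_orthogonal_inf_trichotomy hψ' hvv' hvu' huv' hGv p
  simp only [finrank_comap_subtype] at *
  omega

theorem map_inf_eq_of_forall_apply_eq (e : W ≃ₗ[K] W') {H : Submodule K W}
    {H' : Submodule K W'} (e₂ : H ≃ₗ[K] H') (he : ∀ x : H, e x = e₂ x) {X : Submodule K W}
    {Y : Submodule K W'} (hXY : (X.comap H.subtype).map (e₂ : H →ₗ[K] H') = Y.comap H'.subtype) :
    (H ⊓ X).map (e : W →ₗ[K] W') = H' ⊓ Y := by
  have hcomp : (e : W →ₗ[K] W') ∘ₗ H.subtype = H'.subtype ∘ₗ (e₂ : H →ₗ[K] H') :=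
    LinearMap.ext he
  rw [← map_comap_subtype, ← map_comap_subtype, ← hXY, ← map_comp, hcomp, map_comp]

theorem map_eq_of_isAdapted [FiniteDimensional K W] [FiniteDimensional K W'] (hvv : ψ v v = 0)
    (huv : ψ u v ≠ 0) (hvv' : ψ' v' v' = 0) (huv' : ψ' u' v' ≠ 0) (hFv : IsAdapted ψ F v)
    (hGv : IsAdapted ψ' G v') (hW : finrank K W = finrank K W') {p : ℤ}
    (hp : finrank K (F p) = finrank K (G p)) (e : W ≃ₗ[K] W') (hev : e v = v')
    (he : (ψ.orthogonal (span K {v, u}) ⊓ F p).map (e : W →ₗ[K] W') =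
      ψ'.orthogonal (span K {v', u'}) ⊓ G p) :
    (F p).map (e : W →ₗ[K] W') = G p := by
  by_cases htriv : F p = ⊥ ∨ F p = ⊤
  · exact map_eq_of_eq_bot_or_eq_top e htriv hp
  obtain ⟨hvF, hF⟩ := (or_assoc.mpr (hFv p)).resolve_left htriv
  obtain ⟨hvG, hG⟩ := (or_assoc.mpr (hGv p)).resolve_left
    ((eq_bot_or_eq_top_iff_of_finrank_eq hp hW).not.mp htriv)
  rw [eq_span_singleton_sup_orthogonal_inf hvv huv hvF hF,
    eq_span_singleton_sup_orthogonal_inf hvv' huv' hvG hG, Submodule.map_sup, he, map_span,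
    Set.image_singleton, LinearEquiv.coe_coe, hev]

end HyperbolicSplitting

section Main

open LinearMap.BilinForm

variable {ψ : LinearMap.BilinForm K W} {ψ' : LinearMap.BilinForm K W'} {k : ℤ}
  {F : ℤ → Submodule K W} {G : ℤ → Submodule K W'}

theorem exists_isometry_map_eq_of_hyperbolic_pair [FiniteDimensional K W]
    [FiniteDimensional K W'] (hψ : ψ.IsRefl) (hψ' : ψ'.IsRefl) {v u : W} {v' u' : W'}
    (hvv : ψ v v = 0) (huu : ψ u u = 0) (hvu : ψ v u = 1) (huv : ψ u v ≠ 0)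
    (hvv' : ψ' v' v' = 0) (huu' : ψ' u' u' = 0) (hvu' : ψ' v' u' = 1) (huv' : ψ' u' v' = ψ u v)
    (hFv : IsAdapted ψ F v) (hGv : IsAdapted ψ' G v')
    (hdim : ∀ p, finrank K (F p) = finrank K (G p)) (hW : finrank K W = finrank K W')
    (e₂ : ψ.orthogonal (span K {v, u}) ≃ₗ[K] ψ'.orthogonal (span K {v', u'}))
    (he₂ : ∀ x y, ψ' (e₂ x) (e₂ y) = ψ x y)
    (he₂F : ∀ p, ((F p).comap (ψ.orthogonal (span K {v, u})).subtype).map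
      (e₂ : ψ.orthogonal (span K {v, u}) →ₗ[K] ψ'.orthogonal (span K {v', u'})) =
        (G p).comap (ψ'.orthogonal (span K {v', u'})).subtype) :
    ∃ e : W ≃ₗ[K] W', (∀ x y, ψ' (e x) (e y) = ψ x y) ∧
      ∀ p, (F p).map (e : W →ₗ[K] W') = G p := by
  have huv'₀ : ψ' u' v' ≠ 0 := huv' ▸ huv
  obtain ⟨e₁, he₁, he₁v⟩ := exists_isometry_span_pair hvv huu hvu huv hvv' huu' hvu' huv'
  obtain ⟨e, he, hee₁, hee₂⟩ := exists_isometry_of_isCompl hψ hψ'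
    (isCompl_span_pair_orthogonal hψ hvv hvu huv)
    (isCompl_span_pair_orthogonal hψ' hvv' hvu' huv'₀) e₁ he₁ e₂ he₂
  exact ⟨e, he, fun p => map_eq_of_isAdapted hvv huv hvv' huv'₀ hFv hGv hW (hdim p) e
    ((hee₁ _).trans he₁v) (map_inf_eq_of_forall_apply_eq e e₂ hee₂ (he₂F p))⟩

theorem IsIsotropicFiltration.exists_isometry_map_eq [IsAlgClosed K] [NeZero (2 : K)]
    [FiniteDimensional K W] [FiniteDimensional K W'] {ε : K} (hε : ε = 1 ∨ ε = -1)
    (hψ : ∀ v w, ψ w v = ε * ψ v w) (hψ' : ∀ v w, ψ' w v = ε * ψ' v w)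
    (hnd : ψ.SeparatingLeft) (hnd' : ψ'.SeparatingLeft)
    (hF : IsIsotropicFiltration ψ k F) (hG : IsIsotropicFiltration ψ' k G)
    (hdim : ∀ p, finrank K (F p) = finrank K (G p)) (hW : finrank K W = finrank K W') :
    ∃ e : W ≃ₗ[K] W', (∀ x y, ψ' (e x) (e y) = ψ x y) ∧
      ∀ p, (F p).map (e : W →ₗ[K] W') = G p := by
  induction hn : finrank K W using Nat.strong_induction_on generalizing W W' with
  | _ n ih =>
  rcases subsingleton_or_nontrivial W with hW₀ | hW₀
  · refine ⟨LinearEquiv.ofFinrankEq W W' hW, fun x y => ?_, fun p =>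
      map_eq_of_eq_bot_or_eq_top _ (Or.inl (Subsingleton.elim _ _)) (hdim p)⟩
    simp [Subsingleton.elim x 0]
  by_cases htriv : (∀ p, F p = ⊥ ∨ F p = ⊤) ∧ ε = 1
  · obtain ⟨e, he⟩ := exists_isometry_of_symm (fun v w => by simpa [htriv.2] using hψ w v)
      (fun v w => by simpa [htriv.2] using hψ' w v) hnd hnd' hW
    exact ⟨e, he, fun p => map_eq_of_eq_bot_or_eq_top e (htriv.1 p) (hdim p)⟩
  have : Nontrivial W' := finrank_pos_iff.mp (hW ▸ finrank_pos)
  obtain ⟨v, hv, hvv, hFv⟩ := hF.exists_isotropic_isAdapted hψ hε htriv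
  obtain ⟨v', hv', hvv', hGv⟩ := hG.exists_isotropic_isAdapted hψ' hε <| by
    simpa only [← eq_bot_or_eq_top_iff_of_finrank_eq (hdim _) hW] using htriv
  obtain ⟨u, hvu, huu⟩ := exists_hyperbolic_partner hψ hε hnd hv hvv
  obtain ⟨u', hvu', huu'⟩ := exists_hyperbolic_partner hψ' hε hnd' hv' hvv'
  have hrefl := isRefl_of_apply_swap hψ
  have hrefl' := isRefl_of_apply_swap hψ'
  have huv : ψ u v ≠ 0 := fun h => one_ne_zero (hvu ▸ hrefl u v h)
  have huv' : ψ' u' v' ≠ 0 := fun h => one_ne_zero (hvu' ▸ hrefl' u' v' h)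
  have hH := finrank_orthogonal_span_pair_add_two hrefl hvv hvu huv
  have hH' := finrank_orthogonal_span_pair_add_two hrefl' hvv' hvu' huv'
  obtain ⟨e₂, he₂, he₂F⟩ := ih _ (by omega) (ψ := ψ.restrict _) (ψ' := ψ'.restrict _)
    (fun x y => hψ x y) (fun x y => hψ' x y)
    (separatingLeft_restrict_orthogonal hrefl hnd (isCompl_span_pair_orthogonal hrefl hvv hvu huv))
    (separatingLeft_restrict_orthogonal hrefl' hnd'
      (isCompl_span_pair_orthogonal hrefl' hvv' hvu' huv'))
    (hF.comap_orthogonal_span_pair hrefl hvv hvu huv hFv)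
    (hG.comap_orthogonal_span_pair hrefl' hvv' hvu' huv' hGv)
    (fun p => finrank_comap_orthogonal_span_pair_eq hrefl hrefl' hvv hvu huv hvv' hvu' huv'
      hFv hGv hW (hdim p)) (by omega) rfl
  exact exists_isometry_map_eq_of_hyperbolic_pair hrefl hrefl' hvv huu hvu huv hvv' huu' hvu'
    (by rw [hψ, hψ', hvu, hvu']) hFv hGv hdim hW e₂ he₂ he₂F

end Main

end

theorem stmt9_general {W : Type*} [AddCommGroup W] [Module ℂ W] [FiniteDimensional ℂ W]
    (k : ℤ) (ψ : W →ₗ[ℂ] W →ₗ[ℂ] ℂ)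
    (hnd : ∀ v : W, (∀ w : W, ψ v w = 0) → v = 0)
    (hsymm : ∀ v w : W, ψ w v = (-1 : ℂ) ^ k * ψ v w)
    (F G : ℤ → Submodule ℂ W)
    (hFdec : ∀ p : ℤ, F (p + 1) ≤ F p) (hGdec : ∀ p : ℤ, G (p + 1) ≤ G p)
    (hFbot : ∃ b : ℤ, ∀ p ≥ b, F p = ⊥)
    (hdim : ∀ p : ℤ, Module.finrank ℂ (F p) = Module.finrank ℂ (G p))
    (hdim' : ∀ p : ℤ,
      Module.finrank ℂ (F p) + Module.finrank ℂ (F (k - p + 1)) = Module.finrank ℂ W)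
    (hFiso : ∀ p : ℤ, ∀ v ∈ F p, ∀ w ∈ F (k - p + 1), ψ v w = 0)
    (hGiso : ∀ p : ℤ, ∀ v ∈ G p, ∀ w ∈ G (k - p + 1), ψ v w = 0) :
    ∃ g : W ≃ₗ[ℂ] W,
      (∀ v w : W, ψ (g v) (g w) = ψ v w) ∧
      ∀ p : ℤ, (F p).map (g : W →ₗ[ℂ] W) = G p := by
  have hF : IsIsotropicFiltration ψ k F := ⟨antitone_int_of_succ_le hFdec, hFbot, hdim', hFiso⟩
  have hG := hF.of_finrank_eq (antitone_int_of_succ_le hGdec) hGiso hdim rfl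
  have hε : (-1 : ℂ) ^ k = 1 ∨ (-1 : ℂ) ^ k = -1 := by
    rw [neg_one_zpow_eq_ite]
    split_ifs <;> simp
  exact hF.exists_isometry_map_eq hε hsymm hsymm hnd hnd hG hdim rfl

/-- Let `W` be a finite-dimensional complex vector space, `k` an
integer, and `ψ` a nondegenerate bilinear form on `W` with `ψ(w,v) = (-1)^k ψ(v,w)`.
Let `(F^p)` and `(G^p)` be two decreasing filtrations of `W` by complex subspaces, each
eventually equal to `W` and to `0`, with `dim F^p = dim G^p` and
`dim F^p + dim F^{k-p+1} = dim W` for every `p`, and both isotropic in the sense that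
`ψ(F^p, F^{k-p+1}) = 0` and `ψ(G^p, G^{k-p+1}) = 0` for every `p`.  Then some isometry
of `ψ` carries `(F^p)` onto `(G^p)`: the isometry group of `ψ` acts transitively on the
compact dual `Ď` of the period domain. -/
theorem stmt9 {W : Type*} [AddCommGroup W] [Module ℂ W] [FiniteDimensional ℂ W]
    (k : ℤ) (ψ : W →ₗ[ℂ] W →ₗ[ℂ] ℂ)
    (hnd : ∀ v : W, (∀ w : W, ψ v w = 0) → v = 0)
    (hsymm : ∀ v w : W, ψ w v = (-1 : ℂ) ^ k * ψ v w)
    (F G : ℤ → Submodule ℂ W)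
    (hFdec : ∀ p : ℤ, F (p + 1) ≤ F p) (hGdec : ∀ p : ℤ, G (p + 1) ≤ G p)
    (hFtop : ∃ a : ℤ, ∀ p ≤ a, F p = ⊤) (hGtop : ∃ a : ℤ, ∀ p ≤ a, G p = ⊤)
    (hFbot : ∃ b : ℤ, ∀ p ≥ b, F p = ⊥) (hGbot : ∃ b : ℤ, ∀ p ≥ b, G p = ⊥)
    (hdim : ∀ p : ℤ, Module.finrank ℂ (F p) = Module.finrank ℂ (G p))
    (hdim' : ∀ p : ℤ,
      Module.finrank ℂ (F p) + Module.finrank ℂ (F (k - p + 1)) = Module.finrank ℂ W)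
    (hFiso : ∀ p : ℤ, ∀ v ∈ F p, ∀ w ∈ F (k - p + 1), ψ v w = 0)
    (hGiso : ∀ p : ℤ, ∀ v ∈ G p, ∀ w ∈ G (k - p + 1), ψ v w = 0) :
    ∃ g : W ≃ₗ[ℂ] W,
      (∀ v w : W, ψ (g v) (g w) = ψ v w) ∧
      ∀ p : ℤ, (F p).map (g : W →ₗ[ℂ] W) = G p :=
  stmt9_general k ψ hnd hsymm F G hFdec hGdec hFbot hdim hdim' hFiso hGiso
end
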